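/- Let N, W, L, g, and intervals [a₁,b₁], [a₂,b₂] be as in the separated-support setting (separations at least W mod N), with x supported on [a₁,b₁] and y on [a₂,b₂]. Then for every m, the windowed signal n ↦ (x[n] + y[n]) g[mL-n] equals either n ↦ x[n] g[mL-n], or n ↦ y[n] g[mL-n], or is identically zero. -/

import Mathlib

/-!
If the shifted window met both supports, at points `s ∈ [a₁, b₁]` and `t ∈ [a₂, b₂]`, then
`t - s` would be congruent mod `N` to a difference of two window offsets, an integer of absolute
value `< W`; so one of the circular distances `(t - s) % N`, `(s - t) % N` would be `< W`. But
for disjoint intervals inside `[0, N)` these distances dominate the separations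
`(a₂ - b₁) % N` and `(a₁ - b₂) % N`, both `≥ W`. Hence one of the two windowed sections vanishes.
-/

open Finset

theorem Int.emod_natCast_le_of_nonneg {a : ℤ} (ha : 0 ≤ a) (N : ℕ) : a % N ≤ a := by
  lift a to ℕ using ha
  exact_mod_cast Nat.mod_le a N

theorem Int.min_emod_neg_emod_le_abs {N : ℕ} {a d : ℤ} (h : a ≡ d [ZMOD N]) :
    min (a % N) (-a % N) ≤ |d| := by
  rcases le_total 0 d with hd | hd
  · calc min (a % N) (-a % N) ≤ a % N := min_le_left _ _
      _ = d % N := h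
      _ ≤ |d| := (Int.emod_natCast_le_of_nonneg hd N).trans (le_abs_self d)
  · calc min (a % N) (-a % N) ≤ -a % N := min_le_right _ _
      _ = -d % N := h.neg
      _ ≤ |d| := (Int.emod_natCast_le_of_nonneg (neg_nonneg.mpr hd) N).trans (neg_le_abs d)

theorem lt_or_lt_of_disjoint_Icc {a₁ b₁ a₂ b₂ s t : ℕ}
    (hdisj : Disjoint (Icc a₁ b₁) (Icc a₂ b₂)) (hs : s ∈ Icc a₁ b₁) (ht : t ∈ Icc a₂ b₂) :
    b₁ < a₂ ∨ b₂ < a₁ := by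
  rw [mem_Icc] at hs ht
  by_contra! h
  exact disjoint_left.mp hdisj (mem_Icc.mpr ⟨le_max_left _ _, max_le (by omega) h.1⟩)
    (mem_Icc.mpr ⟨le_max_right _ _, max_le h.2 (by omega)⟩)

theorem emod_sub_le_emod_sub_of_mem_Icc {N a₁ b₁ a₂ b₂ s t : ℕ} (hb₁ : b₁ < N) (hb₂ : b₂ < N)
    (hdisj : Disjoint (Icc a₁ b₁) (Icc a₂ b₂)) (hs : s ∈ Icc a₁ b₁) (ht : t ∈ Icc a₂ b₂) :
    ((a₂ : ℤ) - b₁) % N ≤ ((t : ℤ) - s) % N := by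
  have hcases := lt_or_lt_of_disjoint_Icc hdisj hs ht
  rw [mem_Icc] at hs ht
  rcases hcases with h | h
  · rw [Int.emod_eq_of_lt (by omega) (by omega), Int.emod_eq_of_lt (by omega) (by omega)]
    omega
  · -- both differences lie in `(-N, 0)`, so reducing mod `N` adds `N` to each
    rw [← Int.add_emod_right, ← Int.add_emod_right ((t : ℤ) - s),
      Int.emod_eq_of_lt (by omega) (by omega), Int.emod_eq_of_lt (by omega) (by omega)]
    omega

theorem exists_intCast_modEq_of_window {N W : ℕ} {M : Type*} [Zero M] {g : ZMod N → M}
    {aW : ZMod N} (hsupp : ∀ n : ZMod N, g n ≠ 0 → ∃ j : ℕ, j < W ∧ n = aW + (j : ZMod N))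
    {c : ZMod N} {s t : ℕ} (hs : g (c - s) ≠ 0) (ht : g (c - t) ≠ 0) :
    ∃ d : ℤ, |d| < W ∧ (t : ℤ) - s ≡ d [ZMOD N] := by
  obtain ⟨j, hj, hjs⟩ := hsupp _ hs
  obtain ⟨k, hk, hkt⟩ := hsupp _ ht
  refine ⟨j - k, abs_sub_lt_of_nonneg_of_lt (by positivity) (by exact_mod_cast hj)
    (by positivity) (by exact_mod_cast hk), ?_⟩
  rw [← ZMod.intCast_eq_intCast_iff]
  push_cast
  linear_combination hjs - hkt

theorem forall_add_eq_left_or_forall_add_eq_right {α M : Type*} [AddZeroClass M] {u v : α → M}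
    (h : ∀ a b, u a ≠ 0 → v b ≠ 0 → False) :
    (∀ a, u a + v a = u a) ∨ (∀ a, u a + v a = v a) := by
  by_cases hv : ∀ b, v b = 0
  · exact Or.inl fun a => by rw [hv a, add_zero]
  · obtain ⟨b, hb⟩ := not_forall.mp hv
    exact Or.inr fun a => by rw [not_not.mp fun hu => h a b hu hb, zero_add]

theorem windowed_section_trichotomy_general (N W L : ℕ) (aW : ZMod N) (g : ZMod N → ℂ)
    (hsupp : ∀ n : ZMod N, g n ≠ 0 → ∃ j : ℕ, j < W ∧ n = aW + (j : ZMod N))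
    (a₁ b₁ a₂ b₂ : ℕ) (h₁' : b₁ ≤ N - 1) (h₂' : b₂ ≤ N - 1)
    (hdisj : Disjoint (Finset.Icc a₁ b₁) (Finset.Icc a₂ b₂))
    (hsep₁ : (W : ℤ) ≤ ((a₂ : ℤ) - (b₁ : ℤ)) % (N : ℤ))
    (hsep₂ : (W : ℤ) ≤ ((a₁ : ℤ) - (b₂ : ℤ)) % (N : ℤ))
    (x y : ZMod N → ℂ)
    (hx : ∀ n : ZMod N, x n ≠ 0 → ∃ t : ℕ, a₁ ≤ t ∧ t ≤ b₁ ∧ n = (t : ZMod N))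
    (hy : ∀ n : ZMod N, y n ≠ 0 → ∃ t : ℕ, a₂ ≤ t ∧ t ≤ b₂ ∧ n = (t : ZMod N)) :
    ∀ m : ℕ,
      (∀ n : ZMod N, (x n + y n) * g (((m * L : ℕ) : ZMod N) - n)
          = x n * g (((m * L : ℕ) : ZMod N) - n)) ∨
      (∀ n : ZMod N, (x n + y n) * g (((m * L : ℕ) : ZMod N) - n)
          = y n * g (((m * L : ℕ) : ZMod N) - n)) ∨
      (∀ n : ZMod N, (x n + y n) * g (((m * L : ℕ) : ZMod N) - n) = 0) := by
  intro m
  set c : ZMod N := ((m * L : ℕ) : ZMod N)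
  have hwindow : ∀ n n', x n * g (c - n) ≠ 0 → y n' * g (c - n') ≠ 0 → False := by
    intro n n' hn hn'
    obtain ⟨hxn, hgn⟩ := mul_ne_zero_iff.mp hn
    obtain ⟨hyn', hgn'⟩ := mul_ne_zero_iff.mp hn'
    obtain ⟨s, hs₁, hs₂, rfl⟩ := hx n hxn
    obtain ⟨t, ht₁, ht₂, rfl⟩ := hy n' hyn'
    obtain ⟨d, hd, hmod⟩ := exists_intCast_modEq_of_window hsupp hgn hgn'
    have hs : s ∈ Icc a₁ b₁ := mem_Icc.mpr ⟨hs₁, hs₂⟩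
    have ht : t ∈ Icc a₂ b₂ := mem_Icc.mpr ⟨ht₁, ht₂⟩
    -- `N - 1` truncates at `N = 0`, where both intervals would have to contain `0`
    have hN : 0 < N := by have := lt_or_lt_of_disjoint_Icc hdisj hs ht; omega
    have hb₁ : b₁ < N := by omega
    have hb₂ : b₂ < N := by omega
    have hts := emod_sub_le_emod_sub_of_mem_Icc hb₁ hb₂ hdisj hs ht
    have hst := emod_sub_le_emod_sub_of_mem_Icc hb₂ hb₁ hdisj.symm ht hs
    have hmin := Int.min_emod_neg_emod_le_abs hmod
    rw [neg_sub] at hmin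
    omega
  rcases forall_add_eq_left_or_forall_add_eq_right hwindow with h | h
  · exact Or.inl fun n => by rw [add_mul, h n]
  · exact Or.inr (Or.inl fun n => by rw [add_mul, h n])

/-- Support-disjointness lemma: with `x` and `y` supported on two nonoverlapping intervals of
`{0,...,N-1}` whose circular separations are at least the window length `W`, each windowed
section of `x + y` equals the corresponding windowed section of `x`, or of `y`, or is zero. -/
theorem windowed_section_trichotomy (N W L : ℕ) (hN : 0 < N) [NeZero N] (hW : 0 < W)
    (hL : 0 < L) (aW : ZMod N) (g : ZMod N → ℂ)
    (hsupp : ∀ n : ZMod N, g n ≠ 0 → ∃ j : ℕ, j < W ∧ n = aW + (j : ZMod N))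
    (a₁ b₁ a₂ b₂ : ℕ) (h₁ : a₁ ≤ b₁) (h₁' : b₁ ≤ N - 1) (h₂ : a₂ ≤ b₂) (h₂' : b₂ ≤ N - 1)
    (hdisj : Disjoint (Finset.Icc a₁ b₁) (Finset.Icc a₂ b₂))
    (hsep₁ : (W : ℤ) ≤ ((a₂ : ℤ) - (b₁ : ℤ)) % (N : ℤ))
    (hsep₂ : (W : ℤ) ≤ ((a₁ : ℤ) - (b₂ : ℤ)) % (N : ℤ))
    (x y : ZMod N → ℂ)
    (hx : ∀ n : ZMod N, x n ≠ 0 → ∃ t : ℕ, a₁ ≤ t ∧ t ≤ b₁ ∧ n = (t : ZMod N))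
    (hy : ∀ n : ZMod N, y n ≠ 0 → ∃ t : ℕ, a₂ ≤ t ∧ t ≤ b₂ ∧ n = (t : ZMod N)) :
    ∀ m : ℕ,
      (∀ n : ZMod N, (x n + y n) * g (((m * L : ℕ) : ZMod N) - n)
          = x n * g (((m * L : ℕ) : ZMod N) - n)) ∨
      (∀ n : ZMod N, (x n + y n) * g (((m * L : ℕ) : ZMod N) - n)
          = y n * g (((m * L : ℕ) : ZMod N) - n)) ∨
      (∀ n : ZMod N, (x n + y n) * g (((m * L : ℕ) : ZMod N) - n) = 0) :=
  windowed_section_trichotomy_general N W L aW g hsupp a₁ b₁ a₂ b₂ h₁' h₂' hdisj hsep₁ hsep₂ x y hx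
    hy
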